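/- Let ψ = ψ_{i₁}∘ψ_{i₂}∘⋯∘ψ_{iₘ} where each iₖ ∈ {3,8}, and suppose at least one iₖ equals 3 and at least one iₖ equals 8. Then there exists an irrational real number α with 0 < α < 1 such that ψ fixes the Sturmian word s_{α,0}. -/

import Mathlib

/-- A morphism of the free monoid `{0,1}*`, determined by the images of the two
letters (`false` encodes the letter 0, `true` encodes the letter 1). -/
abbrev Morph := Bool → List Bool

/-- The identity morphism. -/
def idm : Morph := fun a => [a]

/-- Composition of morphisms: `(M σ τ)(a) = σ(τ(a))`. -/
def M (σ τ : Morph) : Morph := fun a => (τ a).flatMap σ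

/-- `compAll g [i₁, …, iₙ] = g i₁ ∘ g i₂ ∘ ⋯ ∘ g iₙ` (the identity for `n = 0`). -/
def compAll (g : Bool → Morph) (l : List Bool) : Morph :=
  l.foldr (fun i acc => M (g i) acc) idm

/-- Iterated composition of a morphism with itself. -/
def mpow (σ : Morph) : ℕ → Morph
  | 0 => idm
  | k + 1 => M σ (mpow σ k)

/-- The length-`n` prefix of an infinite word. -/
def wpref (w : ℕ → Bool) (n : ℕ) : List Bool := (List.range n).map w

/-- `σ` fixes the infinite word `w`: for every `n`, the finite word
`σ(w(0))σ(w(1))⋯σ(w(n-1))` is a prefix of `w`. -/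
def Fixes (σ : Morph) (w : ℕ → Bool) : Prop :=
  ∀ n : ℕ, (wpref w n).flatMap σ = wpref w ((wpref w n).flatMap σ).length

/-- The integer value `⌊(n+1)α + ρ⌋ - ⌊nα + ρ⌋` of the Sturmian word `s_{α,ρ}`. -/
noncomputable def sfl (α ρ : ℝ) (n : ℕ) : ℤ :=
  ⌊((n : ℝ) + 1) * α + ρ⌋ - ⌊(n : ℝ) * α + ρ⌋

/-- The integer value `⌈(n+1)α + ρ⌉ - ⌈nα + ρ⌉` of the Sturmian word `s'_{α,ρ}`. -/
noncomputable def scl (α ρ : ℝ) (n : ℕ) : ℤ :=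
  ⌈((n : ℝ) + 1) * α + ρ⌉ - ⌈(n : ℝ) * α + ρ⌉

/-- The Sturmian word `s_{α,ρ}` as an infinite binary word. -/
noncomputable def sw (α ρ : ℝ) : ℕ → Bool := fun n => decide (sfl α ρ n = 1)

/-- The Sturmian word `s'_{α,ρ}` as an infinite binary word. -/
noncomputable def sw' (α ρ : ℝ) : ℕ → Bool := fun n => decide (scl α ρ n = 1)

/-- The characteristic word `c_α = s_{α,α}`. -/
noncomputable def cw (α : ℝ) : ℕ → Bool := sw α α

/-- `ψ₁ : 0 → 01, 1 → 0` (the Fibonacci morphism, `φ₁`). -/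
def psi1 : Morph := fun a => match a with | false => [false, true] | true => [false]

/-- `ψ₃ : 0 → 0, 1 → 01` (the morphism `G`, i.e. `φ₀`). -/
def psi3 : Morph := fun a => match a with | false => [false] | true => [false, true]

/-- `ψ₄ : 0 → 0, 1 → 10`. -/
def psi4 : Morph := fun a => match a with | false => [false] | true => [true, false]

/-- `ψ₇ : 0 → 10, 1 → 1`. -/
def psi7 : Morph := fun a => match a with | false => [true, false] | true => [true]

/-- `ψ₈ : 0 → 01, 1 → 1`. -/
def psi8 : Morph := fun a => match a with | false => [false, true] | true => [true]

/-- Time reversal of a morphism. -/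
def trev (σ : Morph) : Morph := fun a => (σ a).reverse

/-- The exchange morphism `E : 0 → 1, 1 → 0`. -/
def Em : Morph := fun a => [!a]

/-- Generators `φ₀, φ₁` indexed by a bit: `false ↦ φ₀ (= ψ₃)`, `true ↦ φ₁ (= ψ₁)`. -/
def phiGen : Bool → Morph := fun b => match b with | false => psi3 | true => psi1

/-- Generators of `⟨ψ₁, ψ₃⟩`: `false` encodes the index 1 (`ψ₁`),
`true` encodes the index 3 (`ψ₃`). -/
def g13 : Bool → Morph := fun b => match b with | false => psi1 | true => psi3

/-- Generators of `⟨ψ₃, ψ₈⟩`: `false ↦ ψ₃`, `true ↦ ψ₈`. -/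
def g38 : Bool → Morph := fun b => match b with | false => psi3 | true => psi8

/-- Generators of `⟨ψ₄, ψ₇⟩`: `false ↦ ψ₄`, `true ↦ ψ₇`. -/
def g47 : Bool → Morph := fun b => match b with | false => psi4 | true => psi7

/-- The Kepler matrices `K₀ = [[1,0],[1,1]]` and `K₁ = [[0,1],[1,1]]`. -/
def K : Bool → Matrix (Fin 2) (Fin 2) ℕ
  | false => !![1, 0; 1, 1]
  | true => !![0, 1; 1, 1]

/-!
On Sturmian words of intercept `0`, `ψ₃` and `ψ₈` act on the slope: `ψ₃` maps `s_{α,0}` to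
`s_{α/(1+α),0}` and `ψ₈` maps it to `s_{1/(2-α),0}`, as one checks letter by letter from the
floor values `⌊nα⌋`. Hence `ψ` maps `s_{α,0}` to `s_{f(α),0}`, where `f` is the corresponding
composite of the two Möbius maps. `f` is a continuous self-map of `[0,1]` with `f(0) > 0`
(because of a `ψ₈`) and `f(1) < 1` (because of a `ψ₃`), so it has a fixed point `α ∈ (0,1)`.
This `α` is irrational: both Möbius maps strictly increase the denominator of a rational in `(0,1)`.
-/

open Set

section SlopeMap

variable {F : Type*} [Field F]

def slopeMap : Bool → F → F
  | false, a => a / (1 + a)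
  | true, a => 1 / (2 - a)

def slopeMapComp (l : List Bool) : F → F :=
  l.foldr (fun i f => slopeMap i ∘ f) id

lemma slopeMapComp_cons (i : Bool) (l : List Bool) (a : F) :
    slopeMapComp (i :: l) a = slopeMap i (slopeMapComp l a) := rfl

lemma slopeMap_ratCast [CharZero F] (i : Bool) (q : ℚ) :
    ((slopeMap i q : ℚ) : F) = slopeMap i (q : F) := by
  cases i <;> simp [slopeMap]

lemma slopeMapComp_ratCast [CharZero F] (l : List Bool) (q : ℚ) :
    ((slopeMapComp l q : ℚ) : F) = slopeMapComp l (q : F) := by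
  induction l with
  | nil => rfl
  | cons i l ih => rw [slopeMapComp_cons, slopeMap_ratCast, ih, slopeMapComp_cons]

variable [LinearOrder F] [IsStrictOrderedRing F] {a : F}

lemma slopeMap_mem_Icc (i : Bool) (ha : a ∈ Icc (0 : F) 1) : slopeMap i a ∈ Icc (0 : F) 1 := by
  obtain ⟨ha0, ha1⟩ := ha
  cases i
  · exact ⟨by unfold slopeMap; positivity, (div_le_one (by positivity)).2 (by linarith)⟩
  · have h2a : 0 < 2 - a := by linarith
    exact ⟨by unfold slopeMap; positivity, (div_le_one h2a).2 (by linarith)⟩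

lemma slopeMap_pos {i : Bool} (ha : a ∈ Icc (0 : F) 1) (h : 0 < a ∨ i = true) :
    0 < slopeMap i a := by
  obtain ⟨ha0, ha1⟩ := ha
  cases i
  · have ha0' : 0 < a := by simpa using h
    unfold slopeMap; positivity
  · have h2a : 0 < 2 - a := by linarith
    unfold slopeMap; positivity

lemma slopeMap_lt_one {i : Bool} (ha : a ∈ Icc (0 : F) 1) (h : a < 1 ∨ i = false) :
    slopeMap i a < 1 := by
  obtain ⟨ha0, ha1⟩ := ha
  cases i
  · exact (div_lt_one (by positivity)).2 (by linarith)
  · have ha1' : a < 1 := by simpa using h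
    exact (div_lt_one (by linarith)).2 (by linarith)

lemma slopeMapComp_mem_Icc (l : List Bool) (ha : a ∈ Icc (0 : F) 1) :
    slopeMapComp l a ∈ Icc (0 : F) 1 := by
  induction l with
  | nil => exact ha
  | cons i l ih => exact slopeMap_mem_Icc i ih

lemma slopeMapComp_pos {l : List Bool} (ha : a ∈ Icc (0 : F) 1) (h : 0 < a ∨ true ∈ l) :
    0 < slopeMapComp l a := by
  induction l with
  | nil => exact h.resolve_right (by simp)
  | cons i l ih =>
    refine slopeMap_pos (slopeMapComp_mem_Icc l ha) ?_
    rcases h with h | h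
    · exact .inl (ih (.inl h))
    · rcases List.mem_cons.1 h with rfl | h
      · exact .inr rfl
      · exact .inl (ih (.inr h))

lemma slopeMapComp_lt_one {l : List Bool} (ha : a ∈ Icc (0 : F) 1) (h : a < 1 ∨ false ∈ l) :
    slopeMapComp l a < 1 := by
  induction l with
  | nil => exact h.resolve_right (by simp)
  | cons i l ih =>
    refine slopeMap_lt_one (slopeMapComp_mem_Icc l ha) ?_
    rcases h with h | h
    · exact .inl (ih (.inl h))
    · rcases List.mem_cons.1 h with rfl | h
      · exact .inr rfl
      · exact .inl (ih (.inr h))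

lemma slopeMapComp_mem_Ioo (l : List Bool) (ha : a ∈ Ioo (0 : F) 1) :
    slopeMapComp l a ∈ Ioo (0 : F) 1 :=
  ⟨slopeMapComp_pos (Ioo_subset_Icc_self ha) (.inl ha.1),
    slopeMapComp_lt_one (Ioo_subset_Icc_self ha) (.inl ha.2)⟩

end SlopeMap

lemma Rat.den_inv_of_pos {q : ℚ} (hq : 0 < q) : ((q⁻¹).den : ℚ) = q * q.den := by
  rw [Rat.den_inv_of_ne_zero hq.ne', Nat.cast_natAbs, Int.cast_abs,
    abs_of_pos (Int.cast_pos.2 (Rat.num_pos.2 hq)), Rat.mul_den_eq_num]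

lemma slopeMap_den_lt (i : Bool) {q : ℚ} (hq : q ∈ Ioo (0 : ℚ) 1) :
    q.den < (slopeMap i q).den := by
  obtain ⟨hq0, hq1⟩ := hq
  have hd : (0 : ℚ) < q.den := by exact_mod_cast q.den_pos
  rw [← Nat.cast_lt (α := ℚ)]
  cases i
  · have h : slopeMap false q = (1 + q⁻¹)⁻¹ := by
      simp only [slopeMap]; field_simp; ring
    have hden : (1 + q⁻¹).den = q⁻¹.den := by simp
    rw [h, Rat.den_inv_of_pos (by positivity), hden, Rat.den_inv_of_pos hq0, add_mul, one_mul,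
      inv_mul_cancel_left₀ hq0.ne']
    linarith [mul_pos hq0 hd]
  · rw [slopeMap, one_div, Rat.den_inv_of_pos (by linarith), Rat.ofNat_sub_den]
    nlinarith

lemma slopeMapComp_den_ge (l : List Bool) {q : ℚ} (hq : q ∈ Ioo (0 : ℚ) 1) :
    q.den + l.length ≤ (slopeMapComp l q).den := by
  induction l with
  | nil => rfl
  | cons i l ih =>
    have := slopeMap_den_lt i (slopeMapComp_mem_Ioo l hq)
    rw [slopeMapComp_cons, List.length_cons]
    omega

lemma irrational_of_slopeMapComp_eq_self {l : List Bool} (hl : l ≠ []) {α : ℝ}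
    (hα : α ∈ Ioo (0 : ℝ) 1) (hfix : slopeMapComp l α = α) : Irrational α := by
  rintro ⟨q, rfl⟩
  have hq : q ∈ Ioo (0 : ℚ) 1 := ⟨by exact_mod_cast hα.1, by exact_mod_cast hα.2⟩
  have hfixq : slopeMapComp l q = q := by
    exact_mod_cast (slopeMapComp_ratCast l q).trans hfix
  have := slopeMapComp_den_ge l hq
  rw [hfixq] at this
  have := List.length_pos_of_ne_nil hl
  omega

lemma continuousOn_slopeMapComp (l : List Bool) :
    ContinuousOn (slopeMapComp l : ℝ → ℝ) (Icc 0 1) := by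
  induction l with
  | nil => exact continuousOn_id
  | cons i l ih =>
    have hi : ContinuousOn (slopeMap i : ℝ → ℝ) (Icc 0 1) := by
      cases i
      · exact continuousOn_id.div (by fun_prop) fun x hx => by linarith [hx.1]
      · exact continuousOn_const.div (by fun_prop) fun x hx => by linarith [hx.2]
    exact hi.comp ih fun x hx => slopeMapComp_mem_Icc l hx

lemma exists_slopeMapComp_eq_self {l : List Bool} (h3 : false ∈ l) (h8 : true ∈ l) :
    ∃ α ∈ Ioo (0 : ℝ) 1, slopeMapComp l α = α := by
  have h1 : slopeMapComp l 1 - 1 < (0 : ℝ) := by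
    linarith [slopeMapComp_lt_one (l := l) (a := (1 : ℝ)) (by simp) (.inr h3)]
  have h0 : (0 : ℝ) < slopeMapComp l 0 - 0 := by
    linarith [slopeMapComp_pos (l := l) (a := (0 : ℝ)) (by simp) (.inr h8)]
  obtain ⟨α, hα, hfix⟩ := intermediate_value_Ioo' zero_le_one
    ((continuousOn_slopeMapComp l).sub continuousOn_id) ⟨h1, h0⟩
  exact ⟨α, hα, sub_eq_zero.1 hfix⟩

section Words

def MapsWord (σ : Morph) (w w' : ℕ → Bool) : Prop :=
  ∀ n : ℕ, (wpref w n).flatMap σ = wpref w' ((wpref w n).flatMap σ).length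

variable {σ τ : Morph} {w w' w'' : ℕ → Bool}

lemma wpref_length (w : ℕ → Bool) (n : ℕ) : (wpref w n).length = n := by
  simp [wpref]

lemma wpref_succ (w : ℕ → Bool) (n : ℕ) : wpref w (n + 1) = wpref w n ++ [w n] := by
  simp [wpref, List.range_succ]

lemma mapsWord_of_step (P : ℕ → ℕ) (h0 : P 0 = 0)
    (hstep : ∀ n, wpref w' (P (n + 1)) = wpref w' (P n) ++ σ (w n)) : MapsWord σ w w' := by
  have hP : ∀ n, (wpref w n).flatMap σ = wpref w' (P n) := by
    intro n
    induction n with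
    | zero => simp [wpref, h0]
    | succ n ih => rw [wpref_succ, List.flatMap_append, ih, hstep, List.flatMap_singleton]
  intro n
  rw [hP n, wpref_length]

lemma mapsWord_idm (w : ℕ → Bool) : MapsWord idm w w := by
  intro n
  rw [show (wpref w n).flatMap idm = wpref w n from List.flatMap_singleton' _, wpref_length]

lemma MapsWord.comp (hσ : MapsWord σ w' w'') (hτ : MapsWord τ w w') :
    MapsWord (M σ τ) w w'' := by
  intro n
  rw [show (wpref w n).flatMap (M σ τ) = ((wpref w n).flatMap τ).flatMap σ from
    List.flatMap_assoc.symm, hτ n]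
  exact hσ _

end Words

section SturmianLetters

variable {α : ℝ}

lemma sw_zero_eq_false {j : ℕ} (h : ⌊((j : ℝ) + 1) * α⌋ = ⌊(j : ℝ) * α⌋) : sw α 0 j = false := by
  simp [sw, sfl, h]

lemma sw_zero_eq_true {j : ℕ} (h : ⌊((j : ℝ) + 1) * α⌋ = ⌊(j : ℝ) * α⌋ + 1) :
    sw α 0 j = true := by
  simp [sw, sfl, h]

lemma sw_zero_cases (h0 : 0 ≤ α) (h1 : α < 1) (n : ℕ) :
    (⌊((n : ℝ) + 1) * α⌋ = ⌊(n : ℝ) * α⌋ ∧ sw α 0 n = false) ∨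
      (⌊((n : ℝ) + 1) * α⌋ = ⌊(n : ℝ) * α⌋ + 1 ∧ sw α 0 n = true) := by
  have hle : ⌊(n : ℝ) * α⌋ ≤ ⌊((n : ℝ) + 1) * α⌋ := Int.floor_le_floor (by nlinarith)
  have hlt : ⌊((n : ℝ) + 1) * α⌋ < ⌊(n : ℝ) * α⌋ + 2 := by
    rw [Int.floor_lt]
    push_cast
    linarith [Int.lt_floor_add_one ((n : ℝ) * α)]
  rcases (by omega : ⌊((n : ℝ) + 1) * α⌋ = ⌊(n : ℝ) * α⌋ ∨
      ⌊((n : ℝ) + 1) * α⌋ = ⌊(n : ℝ) * α⌋ + 1) with h | h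
  · exact .inl ⟨h, sw_zero_eq_false h⟩
  · exact .inr ⟨h, sw_zero_eq_true h⟩

end SturmianLetters

lemma floor_mul_div_one_add {α : ℝ} (hα : 0 ≤ α) (x : ℝ) {t : ℝ}
    (ht : t ∈ Icc (x + ⌊x * α⌋) (x + ⌊x * α⌋ + 1)) : ⌊t * (α / (1 + α))⌋ = ⌊x * α⌋ := by
  have hk := Int.floor_le (x * α)
  have hk1 := Int.lt_floor_add_one (x * α)
  have hd : (0 : ℝ) < 1 + α := by linarith
  rw [Int.floor_eq_iff, ← mul_div_assoc, le_div_iff₀ hd, div_lt_iff₀ hd]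
  constructor <;> nlinarith [ht.1, ht.2]

lemma mapsWord_psi3 {α : ℝ} (h0 : 0 ≤ α) (h1 : α < 1) :
    MapsWord psi3 (sw α 0) (sw (α / (1 + α)) 0) := by
  -- `P n` is the length of the image of the length-`n` prefix, which has `⌊nα⌋` ones.
  let P : ℕ → ℕ := fun n => (n + ⌊(n : ℝ) * α⌋).toNat
  have hPZ : ∀ n : ℕ, (P n : ℤ) = n + ⌊(n : ℝ) * α⌋ := fun n =>
    Int.toNat_of_nonneg (add_nonneg n.cast_nonneg (Int.floor_nonneg.2 (by positivity)))
  have hP : ∀ n : ℕ, (P n : ℝ) = n + ⌊(n : ℝ) * α⌋ := fun n => by exact_mod_cast hPZ n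
  refine mapsWord_of_step P (by simp [P]) fun n => ?_
  have hfl : ∀ t ∈ Icc (P n : ℝ) (P n + 1), ⌊t * (α / (1 + α))⌋ = ⌊(n : ℝ) * α⌋ :=
    fun t ht => floor_mul_div_one_add h0 n (by rwa [← hP n])
  have hP0 := hfl (P n) ⟨le_rfl, by linarith⟩
  have hP1 := hfl (P n + 1) ⟨by linarith, le_rfl⟩
  have hPsucc := hPZ (n + 1)
  push_cast at hPsucc
  rcases sw_zero_cases h0 h1 n with ⟨hk, hw⟩ | ⟨hk, hw⟩
  · have hlen : P (n + 1) = P n + 1 := by have := hPZ n; omega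
    rw [hw, hlen, wpref_succ, sw_zero_eq_false (hP1.trans hP0.symm)]
    rfl
  · have hlen : P (n + 1) = P n + 1 + 1 := by have := hPZ n; omega
    have hP2 : ⌊((P n : ℝ) + 1 + 1) * (α / (1 + α))⌋ = ⌊(n : ℝ) * α⌋ + 1 := by
      rw [← hk]
      exact floor_mul_div_one_add h0 _ (by rw [hk, hP n]; push_cast; constructor <;> linarith)
    have hw0 := sw_zero_eq_false (α := α / (1 + α)) (hP1.trans hP0.symm)
    have hw1 := sw_zero_eq_true (α := α / (1 + α)) (j := P n + 1) (by push_cast; rw [hP2, hP1])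
    rw [hw, hlen, wpref_succ, wpref_succ, hw0, hw1, List.append_assoc]
    rfl

section Psi8

variable {α : ℝ}

lemma floor_two_mul_sub_floor_mul_one_div (hα : α < 1) (n : ℤ) :
    ⌊(2 * n - ⌊n * α⌋) * (1 / (2 - α))⌋ = n := by
  have hk := Int.floor_le (n * α)
  have hk1 := Int.lt_floor_add_one (n * α)
  have hd : (0 : ℝ) < 2 - α := by linarith
  rw [Int.floor_eq_iff, mul_one_div, le_div_iff₀ hd, div_lt_iff₀ hd]
  constructor <;> nlinarith

lemma floor_two_mul_sub_floor_add_one_mul_one_div (hα : α < 1) {n : ℤ}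
    (hn : ⌊(n + 1) * α⌋ = ⌊n * α⌋) : ⌊(2 * n - ⌊n * α⌋ + 1) * (1 / (2 - α))⌋ = n := by
  have hk := Int.floor_le (n * α)
  have hk1 := Int.lt_floor_add_one ((n + 1) * α)
  rw [hn] at hk1
  have hd : (0 : ℝ) < 2 - α := by linarith
  rw [Int.floor_eq_iff, mul_one_div, le_div_iff₀ hd, div_lt_iff₀ hd]
  constructor <;> nlinarith

lemma mapsWord_psi8 (h0 : 0 ≤ α) (h1 : α < 1) :
    MapsWord psi8 (sw α 0) (sw (1 / (2 - α)) 0) := by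
  -- `P n` is the length of the image of the length-`n` prefix, which has `n - ⌊nα⌋` zeros.
  let P : ℕ → ℕ := fun n => (2 * n - ⌊(n : ℝ) * α⌋).toNat
  have hPZ : ∀ n : ℕ, (P n : ℤ) = 2 * n - ⌊(n : ℝ) * α⌋ := fun n => by
    have : ⌊(n : ℝ) * α⌋ ≤ n := Int.floor_le_iff.2 (by push_cast; nlinarith)
    exact Int.toNat_of_nonneg (by omega)
  have hP : ∀ n : ℕ, (P n : ℝ) = 2 * n - ⌊(n : ℝ) * α⌋ := fun n => by exact_mod_cast hPZ n
  have hfl : ∀ n : ℕ, ⌊(P n : ℝ) * (1 / (2 - α))⌋ = n := fun n => by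
    rw [hP]; exact_mod_cast floor_two_mul_sub_floor_mul_one_div h1 n
  refine mapsWord_of_step P (by simp [P]) fun n => ?_
  have hPsucc := hPZ (n + 1)
  push_cast at hPsucc
  rcases sw_zero_cases h0 h1 n with ⟨hk, hw⟩ | ⟨hk, hw⟩
  · have hlen : P (n + 1) = P n + 1 + 1 := by have := hPZ n; omega
    have hP1 : ⌊((P n : ℝ) + 1) * (1 / (2 - α))⌋ = n := by
      rw [hP]; exact_mod_cast floor_two_mul_sub_floor_add_one_mul_one_div h1 (n := n)
        (by exact_mod_cast hk)
    have hP2 : ⌊((P n : ℝ) + 1 + 1) * (1 / (2 - α))⌋ = n + 1 := by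
      have := hfl (n + 1)
      rw [hlen] at this
      exact_mod_cast this
    have hw0 := sw_zero_eq_false (α := 1 / (2 - α)) (hP1.trans (hfl n).symm)
    have hw1 := sw_zero_eq_true (α := 1 / (2 - α)) (j := P n + 1) (by push_cast; rw [hP2, hP1])
    rw [hw, hlen, wpref_succ, wpref_succ, hw0, hw1, List.append_assoc]
    rfl
  · have hlen : P (n + 1) = P n + 1 := by have := hPZ n; omega
    have hP1 : ⌊((P n : ℝ) + 1) * (1 / (2 - α))⌋ = n + 1 := by
      have := hfl (n + 1)
      rw [hlen] at this
      exact_mod_cast this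
    rw [hw, hlen, wpref_succ, sw_zero_eq_true (hP1.trans (by rw [hfl n]))]
    rfl

end Psi8

lemma mapsWord_g38 (i : Bool) {α : ℝ} (hα : α ∈ Ico (0 : ℝ) 1) :
    MapsWord (g38 i) (sw α 0) (sw (slopeMap i α) 0) := by
  cases i
  · exact mapsWord_psi3 hα.1 hα.2
  · exact mapsWord_psi8 hα.1 hα.2

lemma mapsWord_compAll_g38 (l : List Bool) {α : ℝ} (hα : α ∈ Ico (0 : ℝ) 1) :
    MapsWord (compAll g38 l) (sw α 0) (sw (slopeMapComp l α) 0) := by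
  induction l with
  | nil => exact mapsWord_idm _
  | cons i l ih =>
    have hαIcc := Ico_subset_Icc_self hα
    exact (mapsWord_g38 i ⟨(slopeMapComp_mem_Icc l hαIcc).1,
      slopeMapComp_lt_one hαIcc (.inl hα.2)⟩).comp ih

/-- For every `ψ = ψ_{i₁} ∘ ⋯ ∘ ψ_{iₘ}` with all `iₖ ∈ {3,8}`
(here `false` encodes `ψ₃` and `true` encodes `ψ₈`), containing at least one
`ψ₃` and at least one `ψ₈`, there is an irrational `α ∈ (0,1)` such that `ψ`
fixes `s_{α,0}`. -/
theorem psi38_fixes_some_s_alpha_zero (l : List Bool) (h3 : false ∈ l) (h8 : true ∈ l) :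
    ∃ α : ℝ, Irrational α ∧ 0 < α ∧ α < 1 ∧ Fixes (compAll g38 l) (sw α 0) := by
  obtain ⟨α, hα, hfix⟩ := exists_slopeMapComp_eq_self h3 h8
  refine ⟨α, irrational_of_slopeMapComp_eq_self (List.ne_nil_of_mem h3) hα hfix, hα.1, hα.2, ?_⟩
  have hmaps := mapsWord_compAll_g38 l (Ioo_subset_Ico_self hα)
  rwa [hfix] at hmaps
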